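/- arXiv:cs/0202001 — 5 statements merged into one kernel-verified Lean document; each statement's English description precedes it below -/
import Mathlib

section
/- For every positive choice program P, the first-order equivalent foe(P) has at least one total stable model. -/
/-!
# STATEMENT 0

For every positive choice program `P`, the first-order equivalent `foe(P)` has
at least one total stable model.

We formalize ground normal logic programs together with (two-valued, hence
*total*) Gelfond–Lifschitz stable models, Datalog rules with `choice((X),(Y))`
goals, and the first-order equivalent `foe` obtained by the standard
`chosen`/`diffChoice` rewriting of the choice goals.
-/

/-- A ground normal logic-program rule over ground atoms `α`. -/
structure GRule (α : Type) where
  head : α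
  pos : Set α
  neg : Set α

/-- A ground normal logic program is a set of ground rules. -/
abbrev GProgram (α : Type) := Set (GRule α)

/-- `M` satisfies a ground rule. -/
def GRule.Sat {α : Type} (r : GRule α) (M : Set α) : Prop :=
  r.pos ⊆ M → (∀ a ∈ r.neg, a ∉ M) → r.head ∈ M

/-- `M` is a model of (i.e. closed under) the program `P`. -/
def IsModel {α : Type} (P : GProgram α) (M : Set α) : Prop := ∀ r ∈ P, r.Sat M

/-- The Gelfond–Lifschitz reduct of `P` with respect to `M`: delete every rule
whose negative body intersects `M`, and delete the negative bodies of the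
remaining rules. -/
def reduct {α : Type} (P : GProgram α) (M : Set α) : GProgram α :=
  {r | ∃ r' ∈ P, (∀ a ∈ r'.neg, a ∉ M) ∧ r = ⟨r'.head, r'.pos, ∅⟩}

/-- The least (Herbrand) model of a program: the intersection of all models. -/
def leastModel {α : Type} (P : GProgram α) : Set α := ⋂₀ {N | IsModel P N}

/-- `M` is a (total, two-valued) stable model of `P` in the sense of
Gelfond–Lifschitz: `M` is the least model of the reduct of `P` by `M`.
Every such model is total: each atom is either true (in `M`) or false. -/
def IsStableModel {α : Type} (P : GProgram α) (M : Set α) : Prop :=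
  M = leastModel (reduct P M)

/-! ## Datalog with choice goals -/

/-- Terms: variables (named by naturals) and constants from `C`. -/
inductive Term (C : Type) where
  | var (v : ℕ)
  | const (c : C)

/-- A relational schema: predicate symbols with arities. -/
structure Schema where
  pred : Type
  ar : pred → ℕ

/-- A (possibly non-ground) atom over schema `S` and constants `C`. -/
structure Atom (S : Schema) (C : Type) where
  p : S.pred
  args : Fin (S.ar p) → Term C

/-- A ground atom. -/
structure GAtom (S : Schema) (C : Type) where
  p : S.pred
  args : Fin (S.ar p) → C

/-- A Datalog rule whose body may additionally contain choice goals
`choice((X),(Y))`, recorded in `cgoals` as pairs `(X, Y)` of disjoint lists of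
variables, with nonempty right side `Y`. -/
structure CRule (S : Schema) (C : Type) where
  head : Atom S C
  pos : List (Atom S C)
  neg : List (Atom S C)
  cgoals : List (List ℕ × List ℕ)
  cgoals_disjoint : ∀ g ∈ cgoals, ∀ v ∈ g.1, v ∉ g.2
  cgoals_right_ne : ∀ g ∈ cgoals, g.2 ≠ []

/-- A choice program: a finite list of rules, possibly with choice goals. -/
abbrev CProgram (S : Schema) (C : Type) := List (CRule S C)

/-- A choice program is *positive* when its non-choice goals contain no
negation. -/
def CProgram.Positive {S : Schema} {C : Type} (P : CProgram S C) : Prop :=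
  ∀ r ∈ P, r.neg = []

def Term.eval {C : Type} (ν : ℕ → C) : Term C → C
  | .var v => ν v
  | .const c => c

def Atom.ground {S : Schema} {C : Type} (a : Atom S C) (ν : ℕ → C) : GAtom S C :=
  ⟨a.p, fun i => (a.args i).eval ν⟩

/-- `W`: the list of all variables occurring in the choice goals of a rule. -/
def CRule.W {S : Schema} {C : Type} (r : CRule S C) : List ℕ :=
  (r.cgoals.flatMap fun g => g.1 ++ g.2).dedup

/-- Atoms of the first-order equivalent `foe(P)`: the original (base) atoms
together with `chosen_r` and `diffChoice_r` atoms for each choice rule `r`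
(rules are referred to by their position in the program). -/
inductive FAtom (S : Schema) (C : Type) where
  | base (a : GAtom S C)
  | chosen (r : ℕ) (w : List C)
  | diff (r : ℕ) (w : List C)

/-- The (ground) positive body of an instantiated rule, as base atoms. -/
def posBody {S : Schema} {C : Type} (r : CRule S C) (ν : ℕ → C) : Set (FAtom S C) :=
  {x | ∃ a ∈ r.pos, x = FAtom.base (a.ground ν)}

/-- The (ground) negative body of an instantiated rule, as base atoms. -/
def negBody {S : Schema} {C : Type} (r : CRule S C) (ν : ℕ → C) : Set (FAtom S C) :=
  {x | ∃ a ∈ r.neg, x = FAtom.base (a.ground ν)}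

/-- The first-order equivalent `foe(P)` of a choice program `P` over the
database `edb`, given as the set of its ground instances:

* facts of the database;
* rules without choice goals, unchanged;
* for each choice rule `r : A ← B(Z), choice((X₁),(Y₁)), …, choice((Xₖ),(Yₖ))`:
  - `r′ : A ← B(Z), chosenᵣ(W)` where `W` lists all variables of the choice goals,
  - `chosenᵣ(W) ← B(Z), ¬ diffChoiceᵣ(W)`,
  - for each choice goal `choice((Xᵢ),(Yᵢ))`:
    `diffChoiceᵣ(W) ← chosenᵣ(W′), Yᵢ ≠ Yᵢ′` where `W′` agrees with `W` on `Xᵢ`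
    (all other variables being fresh primed copies). -/
def foe {S : Schema} {C : Type} (P : CProgram S C) (edb : Set (GAtom S C)) :
    GProgram (FAtom S C) :=
  {r | ∃ a ∈ edb, r = ⟨FAtom.base a, ∅, ∅⟩} ∪
  {r | ∃ i : Fin P.length, ∃ ν : ℕ → C, (P.get i).cgoals = [] ∧
        r = ⟨FAtom.base ((P.get i).head.ground ν), posBody (P.get i) ν,
             negBody (P.get i) ν⟩} ∪
  {r | ∃ i : Fin P.length, ∃ ν : ℕ → C, (P.get i).cgoals ≠ [] ∧
        r = ⟨FAtom.base ((P.get i).head.ground ν),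
             insert (FAtom.chosen i ((P.get i).W.map ν)) (posBody (P.get i) ν),
             negBody (P.get i) ν⟩} ∪
  {r | ∃ i : Fin P.length, ∃ ν : ℕ → C, (P.get i).cgoals ≠ [] ∧
        r = ⟨FAtom.chosen i ((P.get i).W.map ν), posBody (P.get i) ν,
             insert (FAtom.diff i ((P.get i).W.map ν)) (negBody (P.get i) ν)⟩} ∪
  {r | ∃ i : Fin P.length, ∃ g ∈ (P.get i).cgoals, ∃ ν ν' : ℕ → C,
        (∀ v ∈ g.1, ν v = ν' v) ∧ (∃ v ∈ g.2, ν v ≠ ν' v) ∧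
        r = ⟨FAtom.diff i ((P.get i).W.map ν),
             {FAtom.chosen i ((P.get i).W.map ν')}, ∅⟩}

/-!
The stable model is the least model `M` of the definite program keeping the definite rules of
`foe(P)` and the `chosen` rules with head in a set `K` of `chosen` atoms, where `K` is maximal
(Zorn's lemma) among the sets that are derivable in this way and free of `diffChoice` conflicts.
Conflict-freeness keeps the `diffChoice` atoms of `K` out of `M`, and positivity leaves negation
only in the `chosen` rules, so that program lies inside the reduct by `M` and `M` is contained in
the least model of the reduct. Conversely, a `chosen` rule whose body holds in `M` and which is
not blocked there could be added to `K`, so by maximality `M` is a model of the reduct.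
-/

open Set

section GroundPrograms

variable {α : Type}

theorem leastModel_subset_of_isModel {P : GProgram α} {N : Set α} (h : IsModel P N) :
    leastModel P ⊆ N :=
  sInter_subset_of_mem h

theorem leastModel_mono {P Q : GProgram α} (h : P ⊆ Q) : leastModel P ⊆ leastModel Q :=
  fun _ hx => mem_sInter.2 fun N hN => mem_sInter.1 hx N fun r hr => hN r (h hr)

theorem isModel_leastModel {P : GProgram α} (hP : ∀ r ∈ P, r.neg = ∅) :
    IsModel P (leastModel P) := by
  intro r hr hbody _
  refine mem_sInter.2 fun N hN => hN r hr (hbody.trans (sInter_subset_of_mem hN)) ?_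
  simp [hP r hr]

theorem isStableModel_of_leastModel_eq {P Q : GProgram α} {M : Set α}
    (hM : leastModel Q = M) (hQ : Q ⊆ reduct P M) (hmodel : IsModel (reduct P M) M) :
    IsStableModel P M :=
  (hM ▸ leastModel_mono hQ).antisymm (leastModel_subset_of_isModel hmodel)

def choiceReduct (Q : GProgram α) (K : Set α) : GProgram α :=
  {r | ∃ r' ∈ Q, (r'.neg = ∅ ∨ r'.head ∈ K) ∧ r = ⟨r'.head, r'.pos, ∅⟩}

theorem choiceReduct_mono {Q : GProgram α} {K K' : Set α} (h : K ⊆ K') :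
    choiceReduct Q K ⊆ choiceReduct Q K' := by
  rintro _ ⟨r, hr, hK, rfl⟩
  exact ⟨r, hr, hK.imp_right (@h _), rfl⟩

theorem head_mem_leastModel_choiceReduct {Q : GProgram α} {K : Set α} {r : GRule α}
    (hr : r ∈ Q) (hK : r.neg = ∅ ∨ r.head ∈ K) (hbody : r.pos ⊆ leastModel (choiceReduct Q K)) :
    r.head ∈ leastModel (choiceReduct Q K) :=
  isModel_leastModel (by rintro _ ⟨_, -, -, rfl⟩; rfl) ⟨r.head, r.pos, ∅⟩ ⟨r, hr, hK, rfl⟩ hbody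
    (by simp)

end GroundPrograms

section ChoicePrograms

variable {S : Schema} {C : Type} {P : CProgram S C} {edb : Set (GAtom S C)}

/-- `foe P` contains the rule `diffChoiceᵢ(w) ← chosenᵢ(w')`. -/
def Conflict (P : CProgram S C) (i : Fin P.length) (w w' : List C) : Prop :=
  ∃ g ∈ (P.get i).cgoals, ∃ ν ν' : ℕ → C, (∀ v ∈ g.1, ν v = ν' v) ∧ (∃ v ∈ g.2, ν v ≠ ν' v) ∧
    w = (P.get i).W.map ν ∧ w' = (P.get i).W.map ν'

theorem Conflict.symm {i : Fin P.length} {w w' : List C} (h : Conflict P i w w') :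
    Conflict P i w' w := by
  obtain ⟨g, hg, ν, ν', hX, ⟨v, hv, hne⟩, rfl, rfl⟩ := h
  exact ⟨g, hg, ν', ν, fun u hu => (hX u hu).symm, ⟨v, hv, Ne.symm hne⟩, rfl, rfl⟩

theorem mem_W_of_mem_right {r : CRule S C} {g : List ℕ × List ℕ} (hg : g ∈ r.cgoals) {v : ℕ}
    (hv : v ∈ g.2) : v ∈ r.W := by
  rw [CRule.W, List.mem_dedup, List.mem_flatMap]
  exact ⟨g, hg, List.mem_append_right _ hv⟩

theorem Conflict.irrefl {i : Fin P.length} {w : List C} : ¬ Conflict P i w w := by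
  rintro ⟨g, hg, ν, ν', -, ⟨v, hv, hne⟩, rfl, heq⟩
  exact hne (List.map_eq_map_iff.1 heq v (mem_W_of_mem_right hg hv))

def ConflictFree (P : CProgram S C) (K : Set (FAtom S C)) : Prop :=
  ∀ (i : Fin P.length) (w w' : List C),
    FAtom.chosen i w ∈ K → FAtom.chosen i w' ∈ K → ¬ Conflict P i w w'

theorem negBody_eq_empty (hpos : P.Positive) (i : Fin P.length) (ν : ℕ → C) :
    negBody (P.get i) ν = ∅ := by
  rw [negBody, hpos _ (List.get_mem P i)]
  simp

theorem neg_eq_empty_or_chosen_rule_of_mem_foe (hpos : P.Positive) {r : GRule (FAtom S C)}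
    (hr : r ∈ foe P edb) :
    r.neg = ∅ ∨ ∃ i : Fin P.length, ∃ ν : ℕ → C, (P.get i).cgoals ≠ [] ∧
      r = ⟨FAtom.chosen i ((P.get i).W.map ν), posBody (P.get i) ν,
        {FAtom.diff i ((P.get i).W.map ν)}⟩ := by
  rcases hr with ((((⟨_, -, rfl⟩ | ⟨i, ν, -, rfl⟩) | ⟨i, ν, -, rfl⟩) | ⟨i, ν, hcg, rfl⟩) |
    ⟨i, g, -, ν, ν', -, -, rfl⟩)
  · exact Or.inl rfl
  · exact Or.inl (negBody_eq_empty hpos i ν)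
  · exact Or.inl (negBody_eq_empty hpos i ν)
  · exact Or.inr ⟨i, ν, hcg, by rw [negBody_eq_empty hpos, LawfulSingleton.insert_empty_eq]⟩
  · exact Or.inl rfl

variable (P edb) in
def choiceModel (K : Set (FAtom S C)) : Set (FAtom S C) :=
  leastModel (choiceReduct (foe P edb) K)

theorem choiceModel_mono {K K' : Set (FAtom S C)} (h : K ⊆ K') :
    choiceModel P edb K ⊆ choiceModel P edb K' :=
  leastModel_mono (choiceReduct_mono h)

theorem diff_mem_choiceModel_of_conflict {K : Set (FAtom S C)} {i : Fin P.length}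
    {w w' : List C} (hw' : FAtom.chosen i w' ∈ choiceModel P edb K) (h : Conflict P i w w') :
    FAtom.diff i w ∈ choiceModel P edb K := by
  obtain ⟨g, hg, ν, ν', hX, hY, rfl, rfl⟩ := h
  exact head_mem_leastModel_choiceReduct (r := ⟨_, _, _⟩)
    (Or.inr ⟨i, g, hg, ν, ν', hX, hY, rfl⟩) (Or.inl rfl) (singleton_subset_iff.2 hw')

theorem chosen_mem_choiceModel {K : Set (FAtom S C)} {i : Fin P.length} {ν : ℕ → C}
    (hcg : (P.get i).cgoals ≠ []) (hK : FAtom.chosen i ((P.get i).W.map ν) ∈ K)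
    (hbody : posBody (P.get i) ν ⊆ choiceModel P edb K) :
    FAtom.chosen i ((P.get i).W.map ν) ∈ choiceModel P edb K :=
  head_mem_leastModel_choiceReduct (r := ⟨_, _, _⟩) (Or.inl (Or.inr ⟨i, ν, hcg, rfl⟩)) (Or.inr hK)
    hbody

variable (P) in
def candidateAtoms (K : Set (FAtom S C)) : FAtom S C → Prop
  | .base _ => True
  | .chosen n w => FAtom.chosen n w ∈ K
  | .diff n w => ∃ i : Fin P.length, (i : ℕ) = n ∧
      ∃ w', FAtom.chosen n w' ∈ K ∧ Conflict P i w w'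

theorem choiceModel_subset_candidateAtoms (K : Set (FAtom S C)) :
    choiceModel P edb K ⊆ {x | candidateAtoms P K x} := by
  refine leastModel_subset_of_isModel ?_
  rintro _ ⟨r, hr, hK, rfl⟩ hbody -
  rcases hr with ((((⟨_, -, rfl⟩ | ⟨i, ν, -, rfl⟩) | ⟨i, ν, -, rfl⟩) | ⟨i, ν, -, rfl⟩) |
    ⟨i, g, hg, ν, ν', hX, hY, rfl⟩)
  · trivial
  · trivial
  · trivial
  · exact hK.resolve_left (insert_nonempty _ _).ne_empty
  · exact ⟨i, rfl, _, hbody rfl, g, hg, ν, ν', hX, hY, rfl, rfl⟩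

theorem exists_conflict_of_diff_mem_choiceModel {K : Set (FAtom S C)} {i : Fin P.length}
    {w : List C} (h : FAtom.diff i w ∈ choiceModel P edb K) :
    ∃ w', FAtom.chosen i w' ∈ K ∧ Conflict P i w w' := by
  obtain ⟨j, hji, hj⟩ := choiceModel_subset_candidateAtoms K h
  obtain rfl := Fin.val_injective hji
  exact hj

theorem diff_notMem_choiceModel {K : Set (FAtom S C)} (hK : ConflictFree P K)
    {i : Fin P.length} {w : List C} (hw : FAtom.chosen i w ∈ K) :
    FAtom.diff i w ∉ choiceModel P edb K := fun h =>
  let ⟨_, hw', hconf⟩ := exists_conflict_of_diff_mem_choiceModel h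
  hK i _ _ hw hw' hconf

variable (P edb) in
def Admissible (K : Set (FAtom S C)) : Prop :=
  K ⊆ choiceModel P edb K ∧ ConflictFree P K

variable (P edb) in
theorem exists_maximal_admissible : ∃ K, Maximal (Admissible P edb) K := by
  refine zorn_subset {K | Admissible P edb K} fun 𝒞 h𝒞 hchain => ⟨⋃₀ 𝒞, ⟨?_, ?_⟩, ?_⟩
  · rintro x ⟨K, hK𝒞, hx⟩
    exact choiceModel_mono (subset_sUnion_of_mem hK𝒞) ((h𝒞 hK𝒞).1 hx)
  · rintro i w w' ⟨K, hK𝒞, hw⟩ ⟨K', hK'𝒞, hw'⟩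
    obtain ⟨L, hL𝒞, hKL, hK'L⟩ := hchain.directedOn K hK𝒞 K' hK'𝒞
    exact (h𝒞 hL𝒞).2 i w w' (hKL hw) (hK'L hw')
  · exact fun K hK𝒞 => subset_sUnion_of_mem hK𝒞

theorem Admissible.insert_chosen {K : Set (FAtom S C)} (hK : Admissible P edb K)
    {i : Fin P.length} {ν : ℕ → C} (hcg : (P.get i).cgoals ≠ [])
    (hbody : posBody (P.get i) ν ⊆ choiceModel P edb K)
    (hdiff : FAtom.diff i ((P.get i).W.map ν) ∉ choiceModel P edb K) :
    Admissible P edb (insert (FAtom.chosen i ((P.get i).W.map ν)) K) := by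
  have hmono : choiceModel P edb K ⊆ choiceModel P edb (insert _ K) :=
    choiceModel_mono (subset_insert (FAtom.chosen i ((P.get i).W.map ν)) K)
  have hnew : ∀ w', FAtom.chosen i w' ∈ K → ¬ Conflict P i ((P.get i).W.map ν) w' :=
    fun w' hw' hconf => hdiff (diff_mem_choiceModel_of_conflict (hK.1 hw') hconf)
  refine ⟨insert_subset (chosen_mem_choiceModel hcg (mem_insert _ _) (hbody.trans hmono))
    (hK.1.trans hmono), ?_⟩
  intro j w w' hw hw' hconf
  rcases hw with hw | hw <;> rcases hw' with hw' | hw'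
  · simp only [FAtom.chosen.injEq] at hw hw'
    exact Conflict.irrefl (hw.2.trans hw'.2.symm ▸ hconf)
  · simp only [FAtom.chosen.injEq, Fin.val_inj] at hw
    obtain ⟨rfl, rfl⟩ := hw
    exact hnew w' hw' hconf
  · simp only [FAtom.chosen.injEq, Fin.val_inj] at hw'
    obtain ⟨rfl, rfl⟩ := hw'
    exact hnew w hw hconf.symm
  · exact hK.2 j w w' hw hw' hconf

theorem isStableModel_choiceModel (hpos : P.Positive) {K : Set (FAtom S C)}
    (hK : Maximal (Admissible P edb) K) : IsStableModel (foe P edb) (choiceModel P edb K) := by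
  refine isStableModel_of_leastModel_eq rfl ?_ ?_
  · rintro _ ⟨r, hr, hnegK, rfl⟩
    refine ⟨r, hr, ?_, rfl⟩
    rcases neg_eq_empty_or_chosen_rule_of_mem_foe hpos hr with hneg | ⟨i, ν, -, rfl⟩
    · simp [hneg]
    · simpa using diff_notMem_choiceModel hK.1.2 (hnegK.resolve_left (by simp))
  · rintro _ ⟨r, hr, hnegM, rfl⟩ hbody -
    rcases neg_eq_empty_or_chosen_rule_of_mem_foe hpos hr with hneg | ⟨i, ν, hcg, rfl⟩
    · exact head_mem_leastModel_choiceReduct (r := r) hr (Or.inl hneg) hbody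
    · have hins := hK.1.insert_chosen hcg hbody (hnegM _ (mem_singleton _))
      exact hK.1.1 (hK.2 hins (subset_insert _ _) (mem_insert _ _))

end ChoicePrograms

theorem positive_choice_program_foe_has_total_stable_model_general
    {S : Schema} {C : Type}
    (P : CProgram S C) (hpos : P.Positive) (edb : Set (GAtom S C)) :
    ∃ M : Set (FAtom S C), IsStableModel (foe P edb) M := by
  obtain ⟨K, hK⟩ := exists_maximal_admissible P edb
  exact ⟨_, isStableModel_choiceModel hpos hK⟩

/-- For every positive choice program `P` (over a finite
universe of constants and predicate symbols, with an extensional database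
`edb`), the first-order equivalent `foe(P)` has at least one total stable
model. -/
theorem positive_choice_program_foe_has_total_stable_model
    {S : Schema} {C : Type} [Finite S.pred] [Finite C]
    (P : CProgram S C) (hpos : P.Positive) (edb : Set (GAtom S C)) :
    ∃ M : Set (FAtom S C), IsStableModel (foe P edb) M :=
  positive_choice_program_foe_has_total_stable_model_general P hpos edb
end

section
/- For every positive choice program P and every total stable model M of foe(P), the set of chosen_r atoms in M satisfies, for each choice goal choice((Xi),(Yi)) of each rule r, the functional dependency Xi → Yi (i.e., no two chosen_r atoms in M agree on the Xi-arguments but differ on the Yi-arguments). -/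
/-!
A stable model `M` is supported: each of its atoms is the head of a rule whose body holds in `M`,
since otherwise `M` minus that atom would still be a model of the reduct. The only rules of
`foe(P)` deriving `chosenᵣ(w)` carry `¬ diffChoiceᵣ(w)` in their body. If two `chosenᵣ` tuples
agreed on `Xᵢ` but differed on `Yᵢ`, the `diffChoiceᵣ` rule would put `diffChoiceᵣ(w)` into `M`,
leaving `chosenᵣ(w)` unsupported.
-/

section StableModel

variable {α : Type} {P : GProgram α} {M : Set α}

theorem leastModel_subset {N : Set α} (hN : IsModel P N) : leastModel P ⊆ N :=
  Set.sInter_subset_of_mem hN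

theorem isModel_leastModel_reduct (P : GProgram α) (M : Set α) :
    IsModel (reduct P M) (leastModel (reduct P M)) := by
  rintro _ hr hpos - N hN
  exact hN _ hr (hpos.trans (leastModel_subset hN)) (by obtain ⟨_, _, _, rfl⟩ := hr; simp)

theorem IsStableModel.isModel_reduct (hM : IsStableModel P M) : IsModel (reduct P M) M := by
  have h := isModel_leastModel_reduct P M
  rwa [← hM] at h

theorem IsStableModel.head_mem (hM : IsStableModel P M) {r : GRule α} (hr : r ∈ P)
    (hpos : r.pos ⊆ M) (hneg : ∀ a ∈ r.neg, a ∉ M) : r.head ∈ M :=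
  hM.isModel_reduct ⟨r.head, r.pos, ∅⟩ ⟨r, hr, hneg, rfl⟩ hpos (by simp)

theorem IsStableModel.exists_supporting_rule (hM : IsStableModel P M) {a : α} (ha : a ∈ M) :
    ∃ r ∈ P, r.head = a ∧ r.pos ⊆ M ∧ ∀ b ∈ r.neg, b ∉ M := by
  by_contra! hunsupported
  have hmodel : IsModel (reduct P M) (M \ {a}) := by
    rintro _ ⟨r, hr, hneg, rfl⟩ hpos -
    have hpos' : r.pos ⊆ M := hpos.trans Set.sdiff_subset
    refine ⟨hM.head_mem (r := r) hr hpos' hneg, fun hhead => ?_⟩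
    obtain ⟨b, hb, hbM⟩ := hunsupported r hr hhead hpos'
    exact hneg b hb hbM
  have hsub : M ⊆ M \ {a} := by
    conv_lhs => rw [hM]
    exact leastModel_subset hmodel
  exact (hsub ha).2 rfl

end StableModel

section Foe

variable {S : Schema} {C : Type} {P : CProgram S C} {edb : Set (GAtom S C)}

theorem diff_mem_neg_of_head_eq_chosen {r : GRule (FAtom S C)} (hr : r ∈ foe P edb)
    {k : ℕ} {w : List C} (hhead : r.head = FAtom.chosen k w) : FAtom.diff k w ∈ r.neg := by
  rcases hr with ((((⟨_, _, rfl⟩ | ⟨_, _, _, rfl⟩) | ⟨_, _, _, rfl⟩) | ⟨_, _, _, rfl⟩) |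
    ⟨_, _, _, _, _, _, _, rfl⟩)
  all_goals simp only [FAtom.chosen.injEq, reduceCtorEq] at hhead
  obtain ⟨rfl, rfl⟩ := hhead
  exact Set.mem_insert _ _

theorem diff_mem_of_chosen_mem {M : Set (FAtom S C)} (hM : IsStableModel (foe P edb) M)
    {i : Fin P.length} {g : List ℕ × List ℕ} (hg : g ∈ (P.get i).cgoals) {ν ν' : ℕ → C}
    (hν' : FAtom.chosen i ((P.get i).W.map ν') ∈ M) (hX : ∀ v ∈ g.1, ν v = ν' v)
    (hY : ∃ v ∈ g.2, ν v ≠ ν' v) : FAtom.diff i ((P.get i).W.map ν) ∈ M :=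
  hM.head_mem (Or.inr ⟨i, g, hg, ν, ν', hX, hY, rfl⟩) (by simpa using hν') (by simp)

end Foe

theorem choice_stable_model_satisfies_FDs_general
    {S : Schema} {C : Type}
    (P : CProgram S C) (edb : Set (GAtom S C))
    (M : Set (FAtom S C)) (hM : IsStableModel (foe P edb) M) :
    ∀ i : Fin P.length, ∀ g ∈ (P.get i).cgoals, ∀ ν ν' : ℕ → C,
      FAtom.chosen i ((P.get i).W.map ν) ∈ M →
      FAtom.chosen i ((P.get i).W.map ν') ∈ M →
      (∀ v ∈ g.1, ν v = ν' v) → ∀ v ∈ g.2, ν v = ν' v := by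
  intro i g hg ν ν' hν hν' hX
  by_contra! hY
  have hdiff := diff_mem_of_chosen_mem hM hg hν' hX hY
  obtain ⟨r, hr, hhead, -, hneg⟩ := hM.exists_supporting_rule hν
  exact hneg _ (diff_mem_neg_of_head_eq_chosen hr hhead) hdiff

/-- In every total stable model `M` of `foe(P)` of a positive
choice program `P`, the `chosen_r` atoms obey the functional dependency
`Xᵢ → Yᵢ` of every choice goal `choice((Xᵢ),(Yᵢ))` of every rule `r`: two
`chosen_r` tuples (instantiations `W.map ν`, `W.map ν'` of the variable list
`W`) that agree on the `Xᵢ`-arguments also agree on the `Yᵢ`-arguments. -/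
theorem choice_stable_model_satisfies_FDs
    {S : Schema} {C : Type} [Finite S.pred] [Finite C]
    (P : CProgram S C) (hpos : P.Positive) (edb : Set (GAtom S C))
    (M : Set (FAtom S C)) (hM : IsStableModel (foe P edb) M) :
    ∀ i : Fin P.length, ∀ g ∈ (P.get i).cgoals, ∀ ν ν' : ℕ → C,
      FAtom.chosen i ((P.get i).W.map ν) ∈ M →
      FAtom.chosen i ((P.get i).W.map ν') ∈ M →
      (∀ v ∈ g.1, ν v = ν' v) → ∀ v ∈ g.2, ν v = ν' v :=
  choice_stable_model_satisfies_FDs_general P edb M hM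
end

section
/- There exists a positive choice program P (for instance the advisor-selection program actual_adv(S,P) ← student(S,Majr,Yr), professor(P,Majr), choice((S),(P)) over a database in which some student's major matches at least two professors) such that the first-order equivalent foe(P) has no total well-founded model: the well-founded model leaves the chosen atoms undefined, while foe(P) has multiple total stable models. -/
/-! ## The well-founded model via the alternating fixpoint -/

/-- The Gelfond–Lifschitz operator: the least model of the reduct. -/
def gamma {α : Type} (P : GProgram α) (M : Set α) : Set α := leastModel (reduct P M)

theorem reduct_antitone {α : Type} (P : GProgram α) {M M' : Set α} (h : M ⊆ M') :
    reduct P M' ⊆ reduct P M := by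
  rintro r ⟨r', hr', hneg, rfl⟩
  exact ⟨r', hr', fun a ha hm => hneg a ha (h hm), rfl⟩

theorem gamma_antitone {α : Type} (P : GProgram α) : Antitone (gamma P) := by
  intro M M' h
  apply Set.sInter_subset_sInter
  intro N hN r hr
  exact hN r (reduct_antitone P h hr)

/-- The squared (hence monotone) Gelfond–Lifschitz operator. -/
def gammaSq {α : Type} (P : GProgram α) : Set α →o Set α :=
  ⟨fun M => gamma P (gamma P M), fun _ _ h => gamma_antitone P (gamma_antitone P h)⟩

/-- The atoms true in the well-founded model. -/
def wfTrue {α : Type} (P : GProgram α) : Set α := OrderHom.lfp (gammaSq P)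

/-- The atoms true or undefined in the well-founded model. -/
def wfNotFalse {α : Type} (P : GProgram α) : Set α := OrderHom.gfp (gammaSq P)

/-- The well-founded model is total: every atom is either true or false. -/
def WFTotal {α : Type} (P : GProgram α) : Prop := wfTrue P = wfNotFalse P

/-- The atom `a` is undefined in the well-founded model of `P`. -/
def WFUndefined {α : Type} (P : GProgram α) (a : α) : Prop :=
  a ∈ wfNotFalse P ∧ a ∉ wfTrue P

/-! ## The advisor-selection choice program -/

inductive AdvPred : Type where
  | student | professor | actual_adv
  deriving DecidableEq

def advAr : AdvPred → ℕ
  | .student => 3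
  | .professor => 2
  | .actual_adv => 2

def advSchema : Schema := ⟨AdvPred, advAr⟩

/-- `actual_adv(S,P) ← student(S,Majr,Yr), professor(P,Majr), choice((S),(P))`
with variables `S = 0`, `P = 1`, `Majr = 2`, `Yr = 3`. -/
def advRule (C : Type) : CRule advSchema C where
  head := ⟨AdvPred.actual_adv, ![Term.var 0, Term.var 1]⟩
  pos := [⟨AdvPred.student, ![Term.var 0, Term.var 2, Term.var 3]⟩,
          ⟨AdvPred.professor, ![Term.var 1, Term.var 2]⟩]
  neg := []
  cgoals := [([0], [1])]
  cgoals_disjoint := by decide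
  cgoals_right_ne := by decide

def advProg (C : Type) : CProgram advSchema C := [advRule C]

/-!
Fix a selector `f` that picks, for every student `a` having an eligible advisor, an eligible
advisor `f a`. The database together with `chosen(a, f a)`, `actual_adv(a, f a)` and
`diffChoice(a, b)` for `b ≠ f a` is a stable model of `foe(P)`. Every stable model is a fixed
point of `Γ²`, so it contains the well-founded true atoms and is contained in the
true-or-undefined ones. Two selectors with `f₁ s = p₁` and `f₂ s = p₂` therefore give two
stable models that disagree on `chosen(s, p₁)` and `chosen(s, p₂)`, and both atoms are undefined.
-/

section GroundProgram

variable {α : Type} {P : GProgram α} {M N : Set α}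

theorem isModel_reduct_iff :
    IsModel (reduct P M) N ↔ ∀ r ∈ P, (∀ a ∈ r.neg, a ∉ M) → r.pos ⊆ N → r.head ∈ N := by
  constructor
  · intro h r hr hneg hpos
    exact h ⟨r.head, r.pos, ∅⟩ ⟨r, hr, hneg, rfl⟩ hpos fun _ ha => ha.elim
  · rintro h _ ⟨r, hr, hneg, rfl⟩ hpos -
    exact h r hr hneg hpos

theorem isStableModel_of_isLeast (h : IsLeast {N | IsModel (reduct P M) N} M) :
    IsStableModel P M :=
  h.isGLB.sInf_eq.symm

theorem IsStableModel.gammaSq_eq (h : IsStableModel P M) : gammaSq P M = M :=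
  (congrArg (gamma P) h.symm).trans h.symm

theorem IsStableModel.subset_wfNotFalse (h : IsStableModel P M) : M ⊆ wfNotFalse P :=
  OrderHom.le_gfp _ h.gammaSq_eq.ge

theorem IsStableModel.wfTrue_subset (h : IsStableModel P M) : wfTrue P ⊆ M :=
  OrderHom.lfp_le _ h.gammaSq_eq.le

theorem wfUndefined_of_isStableModel {a : α} (hM : IsStableModel P M) (hN : IsStableModel P N)
    (haM : a ∈ M) (haN : a ∉ N) : WFUndefined P a :=
  ⟨hM.subset_wfNotFalse haM, fun ha => haN (hN.wfTrue_subset ha)⟩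

theorem WFUndefined.not_wfTotal {a : α} (h : WFUndefined P a) : ¬ WFTotal P :=
  fun htot => h.2 (htot ▸ h.1)

end GroundProgram

theorem exists_selector_apply_eq {α β : Type} (R : α → β → Prop) {a : α} {b : β} (hab : R a b) :
    ∃ f : α → β, f a = b ∧ ∀ x y, R x y → R x (f x) := by
  classical
  refine ⟨Function.update (fun x => if h : ∃ y, R x y then h.choose else b) a b,
    by simp, fun x y hxy => ?_⟩
  rcases eq_or_ne x a with rfl | hx
  · simpa using hab
  · have hx' : ∃ y, R x y := ⟨y, hxy⟩
    rw [Function.update_of_ne hx, dif_pos hx']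
    exact hx'.choose_spec

namespace AdvisorProgram

variable {C : Type}

theorem advProg_positive : (advProg C).Positive := by
  simp [CProgram.Positive, advProg, advRule]

theorem advProg_get (i : Fin (advProg C).length) : (advProg C).get i = advRule C :=
  match i with | ⟨0, _⟩ => rfl

theorem advProg_index_eq_zero (i : Fin (advProg C).length) : (i : ℕ) = 0 :=
  Nat.lt_one_iff.mp i.isLt

theorem advRule_cgoals : (advRule C).cgoals = [([0], [1])] := rfl

theorem advRule_W : (advRule C).W = [0, 1] := rfl

theorem ground_student (ν : ℕ → C) :
    (⟨AdvPred.student, ![Term.var 0, Term.var 2, Term.var 3]⟩ : Atom advSchema C).ground ν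
      = ⟨AdvPred.student, ![ν 0, ν 2, ν 3]⟩ := by
  show (⟨AdvPred.student, _⟩ : GAtom advSchema C) = _
  congr 1; funext i; fin_cases i <;> rfl

theorem ground_professor (ν : ℕ → C) :
    (⟨AdvPred.professor, ![Term.var 1, Term.var 2]⟩ : Atom advSchema C).ground ν
      = ⟨AdvPred.professor, ![ν 1, ν 2]⟩ := by
  show (⟨AdvPred.professor, _⟩ : GAtom advSchema C) = _
  congr 1; funext i; fin_cases i <;> rfl

theorem advRule_head_ground (ν : ℕ → C) :
    (advRule C).head.ground ν = ⟨AdvPred.actual_adv, ![ν 0, ν 1]⟩ := by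
  show (⟨AdvPred.actual_adv, _⟩ : GAtom advSchema C) = _
  congr 1; funext i; fin_cases i <;> rfl

theorem posBody_advRule (ν : ℕ → C) : posBody (advRule C) ν =
    {FAtom.base ⟨AdvPred.student, ![ν 0, ν 2, ν 3]⟩,
     FAtom.base ⟨AdvPred.professor, ![ν 1, ν 2]⟩} := by
  ext x
  simp only [posBody, advRule, List.mem_cons, List.not_mem_nil, or_false, exists_eq_or_imp,
    exists_eq_left, Set.mem_ofPred_eq, Set.mem_insert_iff, Set.mem_singleton_iff,
    ground_student, ground_professor]

theorem negBody_advRule (ν : ℕ → C) : negBody (advRule C) ν = ∅ := by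
  simp [negBody, advRule]

variable (edb : Set (GAtom advSchema C))

/-- The ground rules of `foe(advProg)`, with `a, b, m, y` standing for the values of the
variables `S, P, Majr, Yr`. -/
inductive FoeRule : GRule (FAtom advSchema C) → Prop
  | fact {g : GAtom advSchema C} : g ∈ edb → FoeRule ⟨FAtom.base g, ∅, ∅⟩
  | actualAdv (a b m y : C) : FoeRule
      ⟨FAtom.base ⟨AdvPred.actual_adv, ![a, b]⟩,
        {FAtom.chosen 0 [a, b], FAtom.base ⟨AdvPred.student, ![a, m, y]⟩,
          FAtom.base ⟨AdvPred.professor, ![b, m]⟩}, ∅⟩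
  | chosen (a b m y : C) : FoeRule
      ⟨FAtom.chosen 0 [a, b],
        {FAtom.base ⟨AdvPred.student, ![a, m, y]⟩, FAtom.base ⟨AdvPred.professor, ![b, m]⟩},
        {FAtom.diff 0 [a, b]}⟩
  | diffChoice {a b b' : C} : b ≠ b' → FoeRule ⟨FAtom.diff 0 [a, b], {FAtom.chosen 0 [a, b']}, ∅⟩

theorem foeRule_of_mem_foe {r : GRule (FAtom advSchema C)} (hr : r ∈ foe (advProg C) edb) :
    FoeRule edb r := by
  rcases hr with ((((⟨g, hg, rfl⟩ | ⟨i, ν, hc, rfl⟩) | ⟨i, ν, -, rfl⟩) | ⟨i, ν, -, rfl⟩) |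
    ⟨i, g, hg, ν, ν', hX, hY, rfl⟩)
  · exact .fact hg
  · rw [advProg_get, advRule_cgoals] at hc
    exact absurd hc (List.cons_ne_nil _ _)
  · simp only [advProg_get, advProg_index_eq_zero, advRule_head_ground, posBody_advRule,
      negBody_advRule, advRule_W]
    exact .actualAdv (ν 0) (ν 1) (ν 2) (ν 3)
  · simp only [advProg_get, advProg_index_eq_zero, posBody_advRule, negBody_advRule,
      advRule_W, List.map_cons, List.map_nil, LawfulSingleton.insert_empty_eq]
    exact .chosen (ν 0) (ν 1) (ν 2) (ν 3)
  · rw [advProg_get, advRule_cgoals, List.mem_singleton] at hg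
    subst hg
    simp only [List.mem_singleton, forall_eq, exists_eq_left] at hX hY
    simp only [advProg_index_eq_zero, advProg_get, advRule_W, List.map_cons, List.map_nil, hX]
    exact .diffChoice hY

theorem mem_foe_of_foeRule {r : GRule (FAtom advSchema C)} (hr : FoeRule edb r) :
    r ∈ foe (advProg C) edb := by
  let i : Fin (advProg C).length := ⟨0, Nat.one_pos⟩
  have hc : ((advProg C).get i).cgoals ≠ [] := by
    rw [advProg_get, advRule_cgoals]; exact List.cons_ne_nil _ _
  rcases hr with ⟨hg⟩ | ⟨a, b, m, y⟩ | ⟨a, b, m, y⟩ | @⟨a, b, b', hb⟩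
  · exact Or.inl (Or.inl (Or.inl (Or.inl ⟨_, hg, rfl⟩)))
  · refine Or.inl (Or.inl (Or.inr ⟨i, fun n => [a, b, m, y].getD n a, hc, ?_⟩))
    simp only [advProg_get, advRule_head_ground, posBody_advRule, negBody_advRule, advRule_W]
    rfl
  · refine Or.inl (Or.inr ⟨i, fun n => [a, b, m, y].getD n a, hc, ?_⟩)
    simp only [advProg_get, posBody_advRule, negBody_advRule, advRule_W,
      LawfulSingleton.insert_empty_eq]
    rfl
  · refine Or.inr ⟨i, ([0], [1]), by rw [advProg_get, advRule_cgoals]; exact .head _,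
      fun n => [a, b].getD n a, fun n => [a, b'].getD n a, by simp, ⟨1, .head _, hb⟩, ?_⟩
    simp only [advProg_get, advRule_W]
    rfl

def Eligible (a b : C) : Prop :=
  ∃ m y, (⟨AdvPred.student, ![a, m, y]⟩ : GAtom advSchema C) ∈ edb ∧
    (⟨AdvPred.professor, ![b, m]⟩ : GAtom advSchema C) ∈ edb

def choiceModel (f : C → C) : Set (FAtom advSchema C) :=
  {x | match x with
    | .base g => g ∈ edb ∨ ∃ a, Eligible edb a (f a) ∧ g = ⟨AdvPred.actual_adv, ![a, f a]⟩
    | .chosen r w => ∃ a, Eligible edb a (f a) ∧ r = 0 ∧ w = [a, f a]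
    | .diff r w => ∃ a b, Eligible edb a (f a) ∧ b ≠ f a ∧ r = 0 ∧ w = [a, b]}

variable {edb} {f : C → C}

theorem chosen_mem_choiceModel {a b : C} :
    FAtom.chosen 0 [a, b] ∈ choiceModel edb f ↔ Eligible edb a (f a) ∧ b = f a := by
  simp [choiceModel]

theorem diff_mem_choiceModel {a b : C} :
    FAtom.diff 0 [a, b] ∈ choiceModel edb f ↔ Eligible edb a (f a) ∧ b ≠ f a := by
  simp [choiceModel]

theorem mem_edb_of_base_mem_choiceModel {g : GAtom advSchema C}
    (h : FAtom.base g ∈ choiceModel edb f) (hg : g.p ≠ AdvPred.actual_adv) : g ∈ edb :=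
  h.resolve_right fun ⟨_, _, hga⟩ => hg (congrArg GAtom.p hga)

theorem choiceModel_subset_of_isModel_reduct {N : Set (FAtom advSchema C)}
    (hN : IsModel (reduct (foe (advProg C) edb) (choiceModel edb f)) N) :
    choiceModel edb f ⊆ N := by
  have head_mem {r} (hr : FoeRule edb r) (hneg : ∀ x ∈ r.neg, x ∉ choiceModel edb f)
      (hpos : r.pos ⊆ N) : r.head ∈ N :=
    isModel_reduct_iff.1 hN r (mem_foe_of_foeRule edb hr) hneg hpos
  have fact_mem {g} (hg : g ∈ edb) : FAtom.base g ∈ N :=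
    head_mem (.fact hg) (fun _ h => h.elim) (Set.empty_subset _)
  have chosen_mem {a} (ha : Eligible edb a (f a)) : FAtom.chosen 0 [a, f a] ∈ N := by
    obtain ⟨m, y, hs, hp⟩ := ha
    refine head_mem (.chosen a (f a) m y) ?_ ?_
    · rintro x rfl
      simp [diff_mem_choiceModel]
    · simp only [Set.insert_subset_iff, Set.singleton_subset_iff]
      exact ⟨fact_mem hs, fact_mem hp⟩
  rintro (g | ⟨r, w⟩ | ⟨r, w⟩) hx
  · rcases hx with hg | ⟨a, ha, rfl⟩
    · exact fact_mem hg
    · have ⟨m, y, hs, hp⟩ := ha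
      refine head_mem (.actualAdv a (f a) m y) (fun _ h => h.elim) ?_
      simp only [Set.insert_subset_iff, Set.singleton_subset_iff]
      exact ⟨chosen_mem ha, fact_mem hs, fact_mem hp⟩
  · obtain ⟨a, ha, rfl, rfl⟩ := hx
    exact chosen_mem ha
  · obtain ⟨a, b, ha, hb, rfl, rfl⟩ := hx
    exact head_mem (.diffChoice hb) (fun _ h => h.elim)
      (Set.singleton_subset_iff.2 (chosen_mem ha))

theorem isModel_reduct_choiceModel (hf : ∀ a b, Eligible edb a b → Eligible edb a (f a)) :
    IsModel (reduct (foe (advProg C) edb) (choiceModel edb f)) (choiceModel edb f) := by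
  refine isModel_reduct_iff.2 fun r hr hneg hpos => ?_
  rcases foeRule_of_mem_foe edb hr with hg | ⟨a, b, m, y⟩ | ⟨a, b, m, y⟩ | @⟨a, b, b', hb⟩
  · exact Or.inl hg
  · obtain ⟨ha, rfl⟩ := chosen_mem_choiceModel.1 (hpos (Set.mem_insert _ _))
    exact Or.inr ⟨a, ha, rfl⟩
  · have hs := mem_edb_of_base_mem_choiceModel (hpos (Set.mem_insert _ _)) nofun
    have hp := mem_edb_of_base_mem_choiceModel (hpos (Set.mem_insert_of_mem _ rfl)) nofun
    have ha : Eligible edb a (f a) := hf a b ⟨m, y, hs, hp⟩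
    have hb : b = f a := by
      by_contra hb
      exact hneg _ rfl (diff_mem_choiceModel.2 ⟨ha, hb⟩)
    exact chosen_mem_choiceModel.2 ⟨ha, hb⟩
  · obtain ⟨ha, rfl⟩ := chosen_mem_choiceModel.1 (hpos rfl)
    exact diff_mem_choiceModel.2 ⟨ha, hb⟩

theorem isStableModel_choiceModel (hf : ∀ a b, Eligible edb a b → Eligible edb a (f a)) :
    IsStableModel (foe (advProg C) edb) (choiceModel edb f) :=
  isStableModel_of_isLeast
    ⟨isModel_reduct_choiceModel hf, fun _ => choiceModel_subset_of_isModel_reduct⟩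

end AdvisorProgram

open AdvisorProgram

theorem advisor_foe_has_no_total_wellfounded_model_general
    {C : Type} (edb : Set (GAtom advSchema C))
    (s m y p₁ p₂ : C) (hne : p₁ ≠ p₂)
    (hs : (⟨AdvPred.student, ![s, m, y]⟩ : GAtom advSchema C) ∈ edb)
    (h1 : (⟨AdvPred.professor, ![p₁, m]⟩ : GAtom advSchema C) ∈ edb)
    (h2 : (⟨AdvPred.professor, ![p₂, m]⟩ : GAtom advSchema C) ∈ edb) :
    (advProg C).Positive ∧
    ¬ WFTotal (foe (advProg C) edb) ∧
    WFUndefined (foe (advProg C) edb) (FAtom.chosen 0 [s, p₁]) ∧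
    WFUndefined (foe (advProg C) edb) (FAtom.chosen 0 [s, p₂]) ∧
    ∃ M₁ M₂ : Set (FAtom advSchema C),
      IsStableModel (foe (advProg C) edb) M₁ ∧
      IsStableModel (foe (advProg C) edb) M₂ ∧ M₁ ≠ M₂ := by
  have hs₁ : Eligible edb s p₁ := ⟨m, y, hs, h1⟩
  have hs₂ : Eligible edb s p₂ := ⟨m, y, hs, h2⟩
  obtain ⟨f₁, hf₁s, hf₁⟩ := exists_selector_apply_eq (Eligible edb) hs₁
  obtain ⟨f₂, hf₂s, hf₂⟩ := exists_selector_apply_eq (Eligible edb) hs₂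
  have mem₁ : FAtom.chosen 0 [s, p₁] ∈ choiceModel edb f₁ :=
    chosen_mem_choiceModel.2 ⟨hf₁s ▸ hs₁, hf₁s.symm⟩
  have mem₂ : FAtom.chosen 0 [s, p₂] ∈ choiceModel edb f₂ :=
    chosen_mem_choiceModel.2 ⟨hf₂s ▸ hs₂, hf₂s.symm⟩
  have not_mem₁ : FAtom.chosen 0 [s, p₂] ∉ choiceModel edb f₁ :=
    fun h => hne (hf₁s.symm.trans (chosen_mem_choiceModel.1 h).2.symm)
  have not_mem₂ : FAtom.chosen 0 [s, p₁] ∉ choiceModel edb f₂ :=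
    fun h => hne ((chosen_mem_choiceModel.1 h).2.trans hf₂s)
  have stable₁ := isStableModel_choiceModel hf₁
  have stable₂ := isStableModel_choiceModel hf₂
  have undef₁ := wfUndefined_of_isStableModel stable₁ stable₂ mem₁ not_mem₂
  have undef₂ := wfUndefined_of_isStableModel stable₂ stable₁ mem₂ not_mem₁
  exact ⟨advProg_positive, undef₁.not_wfTotal, undef₁, undef₂, _, _, stable₁, stable₂,
    fun h => not_mem₂ (h ▸ mem₁)⟩

/-- The advisor-selection program is a positive choice
program whose first-order equivalent (over a database where student `s`'s
major `m` matches the two distinct professors `p₁ ≠ p₂`) has no total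
well-founded model; the well-founded model leaves the `chosen` atoms
undefined, while the first-order equivalent has (at least) two distinct total
stable models. -/
theorem advisor_foe_has_no_total_wellfounded_model
    {C : Type} [Finite C] (edb : Set (GAtom advSchema C))
    (s m y p₁ p₂ : C) (hne : p₁ ≠ p₂)
    (hs : (⟨AdvPred.student, ![s, m, y]⟩ : GAtom advSchema C) ∈ edb)
    (h1 : (⟨AdvPred.professor, ![p₁, m]⟩ : GAtom advSchema C) ∈ edb)
    (h2 : (⟨AdvPred.professor, ![p₂, m]⟩ : GAtom advSchema C) ∈ edb) :
    (advProg C).Positive ∧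
    ¬ WFTotal (foe (advProg C) edb) ∧
    WFUndefined (foe (advProg C) edb) (FAtom.chosen 0 [s, p₁]) ∧
    WFUndefined (foe (advProg C) edb) (FAtom.chosen 0 [s, p₂]) ∧
    ∃ M₁ M₂ : Set (FAtom advSchema C),
      IsStableModel (foe (advProg C) edb) M₁ ∧
      IsStableModel (foe (advProg C) edb) M₂ ∧ M₁ ≠ M₂ :=
  advisor_foe_has_no_total_wellfounded_model_general edb s m y p₁ p₂ hne hs h1 h2
end

section
/- Every XY-stratified program is locally stratified. -/
/-- A ground program is locally stratified (Przymusinski) when it admits a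
level mapping of ground atoms (into the ordinals) such that in each ground
rule the head's level is at least the level of each positive body atom and
strictly greater than the level of each negated body atom. -/
def LocallyStratified {α : Type} (G : GProgram α) : Prop :=
  ∃ ℓ : α → Ordinal.{0}, ∀ r ∈ G,
    (∀ a ∈ r.pos, ℓ a ≤ ℓ r.head) ∧ (∀ a ∈ r.neg, ℓ a < ℓ r.head)

/-- The temporal argument of an atom: either `T + k` (an offset `k` from the
temporal variable `T` of the rule) or a constant. -/
inductive TTerm : Type where
  | ofs (k : ℕ)
  | const (c : ℕ)
  deriving DecidableEq

def TTerm.eval (τ : ℕ) : TTerm → ℕ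
  | .ofs k => τ + k
  | .const c => c

/-- An atom of a (mutually recursive) predicate `p`, with its distinguished
temporal argument `t` and its ordinary arguments `args`. -/
structure RAtom (P : Type) (arP : P → ℕ) (C : Type) where
  p : P
  t : TTerm
  args : Fin (arP p) → Term C

/-- An atom of an extensional (database) predicate. -/
structure EAtom (E : Type) (arE : E → ℕ) (C : Type) where
  e : E
  args : Fin (arE e) → Term C

/-- A rule of an XY-program: a head and positive/negative recursive
(`posR`/`negR`) and extensional (`posE`/`negE`) body atoms. -/
structure XYRule (P E : Type) (arP : P → ℕ) (arE : E → ℕ) (C : Type) where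
  head : RAtom P arP C
  posR : List (RAtom P arP C)
  negR : List (RAtom P arP C)
  posE : List (EAtom E arE C)
  negE : List (EAtom E arE C)

/-- An X-rule: the temporal argument of every recursive body goal equals that
of the head. -/
def XYRule.IsXRule {P E : Type} {arP : P → ℕ} {arE : E → ℕ} {C : Type}
    (r : XYRule P E arP arE C) : Prop :=
  ∃ h : ℕ, r.head.t = .ofs h ∧ ∀ a ∈ r.posR ++ r.negR, a.t = .ofs h

/-- A Y-rule: the temporal argument of some recursive body goals is one less
than that of the head (via the successor `J+1`), the others being equal to
it. -/
def XYRule.IsYRule {P E : Type} {arP : P → ℕ} {arE : E → ℕ} {C : Type}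
    (r : XYRule P E arP arE C) : Prop :=
  ∃ h : ℕ, r.head.t = .ofs (h + 1) ∧
    (∀ a ∈ r.posR ++ r.negR, a.t = .ofs h ∨ a.t = .ofs (h + 1)) ∧
    ∃ a ∈ r.posR ++ r.negR, a.t = .ofs h

/-- An exit rule: the head's temporal argument is a constant and the body has
no recursive goals. -/
def XYRule.IsExitRule {P E : Type} {arP : P → ℕ} {arE : E → ℕ} {C : Type}
    (r : XYRule P E arP arE C) : Prop :=
  (∃ c, r.head.t = .const c) ∧ r.posR = [] ∧ r.negR = []

/-- An XY-program: every rule is an X-rule, a Y-rule, or an exit rule. -/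
def IsXYProgram {P E : Type} {arP : P → ℕ} {arE : E → ℕ} {C : Type}
    (Pr : List (XYRule P E arP arE C)) : Prop :=
  ∀ r ∈ Pr, r.IsXRule ∨ r.IsYRule ∨ r.IsExitRule

/-! ## The bistate version -/

/-- Predicates of the bistate version: `new`/`old` copies (`true` = `new`) of
the recursive predicates, plus the extensional predicates. -/
abbrev BiPred (P E : Type) := (Bool × P) ⊕ E

def biar {P E : Type} (arP : P → ℕ) (arE : E → ℕ) : BiPred P E → ℕ :=
  Sum.elim (fun bp => arP bp.2) arE

/-- A non-ground atom of an ordinary (non-temporal) normal program. -/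
structure NAtom (Q : Type) (arQ : Q → ℕ) (C : Type) where
  q : Q
  args : Fin (arQ q) → Term C

/-- A non-ground rule of an ordinary normal program. -/
structure NRule (Q : Type) (arQ : Q → ℕ) (C : Type) where
  head : NAtom Q arQ C
  pos : List (NAtom Q arQ C)
  neg : List (NAtom Q arQ C)

/-- The bistate version of an XY-rule: head predicates get prefix `new`; a
recursive body predicate gets prefix `new` if its temporal argument equals the
head's, and `old` otherwise; temporal arguments are dropped. -/
def XYRule.bistate {P E : Type} {arP : P → ℕ} {arE : E → ℕ} {C : Type}
    (r : XYRule P E arP arE C) : NRule (BiPred P E) (biar arP arE) C where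
  head := ⟨Sum.inl (true, r.head.p), r.head.args⟩
  pos := (r.posR.map fun a =>
            (⟨Sum.inl (decide (a.t = r.head.t), a.p), a.args⟩ :
              NAtom (BiPred P E) (biar arP arE) C)) ++
         r.posE.map fun a => ⟨Sum.inr a.e, a.args⟩
  neg := (r.negR.map fun a =>
            (⟨Sum.inl (decide (a.t = r.head.t), a.p), a.args⟩ :
              NAtom (BiPred P E) (biar arP arE) C)) ++
         r.negE.map fun a => ⟨Sum.inr a.e, a.args⟩

/-- A stratification of an ordinary normal program. -/
def NStratifiedBy {Q : Type} {arQ : Q → ℕ} {C : Type}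
    (Pr : List (NRule Q arQ C)) (σ : Q → ℕ) : Prop :=
  ∀ r ∈ Pr, (∀ a ∈ r.pos, σ a.q ≤ σ r.head.q) ∧ (∀ a ∈ r.neg, σ a.q < σ r.head.q)

/-- An XY-program is XY-stratified when its bistate version is a stratified
program. -/
def XYStratified {P E : Type} {arP : P → ℕ} {arE : E → ℕ} {C : Type}
    (Pr : List (XYRule P E arP arE C)) : Prop :=
  IsXYProgram Pr ∧ ∃ σ : BiPred P E → ℕ, NStratifiedBy (Pr.map XYRule.bistate) σ

/-! ## Ground instantiation of an XY-program -/

/-- Ground atoms: timed ground atoms of the recursive predicates, and ground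
atoms of the extensional predicates. -/
abbrev GXAtom (P E : Type) (arP : P → ℕ) (arE : E → ℕ) (C : Type) :=
  (Σ p : P, ℕ × (Fin (arP p) → C)) ⊕ (Σ e : E, Fin (arE e) → C)

def RAtom.ground {P E : Type} {arP : P → ℕ} {arE : E → ℕ} {C : Type}
    (a : RAtom P arP C) (τ : ℕ) (ν : ℕ → C) : GXAtom P E arP arE C :=
  Sum.inl ⟨a.p, (a.t.eval τ, fun i => (a.args i).eval ν)⟩

def EAtom.ground {P E : Type} {arP : P → ℕ} {arE : E → ℕ} {C : Type}
    (a : EAtom E arE C) (ν : ℕ → C) : GXAtom P E arP arE C :=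
  Sum.inr ⟨a.e, fun i => (a.args i).eval ν⟩

/-- The ground instantiation of an XY-program `Pr` over the extensional
database `edb` (`τ` is the value of the temporal variable, `ν` the values of
the ordinary variables). -/
def groundXY {P E : Type} {arP : P → ℕ} {arE : E → ℕ} {C : Type}
    (Pr : List (XYRule P E arP arE C)) (edb : Set (Σ e : E, Fin (arE e) → C)) :
    GProgram (GXAtom P E arP arE C) :=
  {r | ∃ e ∈ edb, r = ⟨Sum.inr e, ∅, ∅⟩} ∪
  {r | ∃ rl ∈ Pr, ∃ τ : ℕ, ∃ ν : ℕ → C,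
        r = ⟨rl.head.ground τ ν,
             {x | ∃ a ∈ rl.posR, x = a.ground τ ν} ∪
               {x | ∃ a ∈ rl.posE, x = a.ground ν},
             {x | ∃ a ∈ rl.negR, x = a.ground τ ν} ∪
               {x | ∃ a ∈ rl.negE, x = a.ground ν}⟩}

/-!
Order ground atoms lexicographically: first by time stamp, then by the stratum that the
stratification `σ` of the bistate program assigns to the `new` copy of the predicate
(extensional atoms are placed at time `0`). In a ground X-rule all recursive atoms share the
head's time, so `σ` compares them; in a ground Y-rule the `old` atoms have a strictly smaller
time stamp and lie below the head whatever their stratum. Well-ordering `ℕ ×ₗ ℕ` into the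
ordinals gives a level mapping.
-/

theorem locallyStratified_of_level {α β : Type} [LinearOrder β] [WellFoundedLT β]
    {G : GProgram α} (ℓ : α → β)
    (hℓ : ∀ r ∈ G, (∀ a ∈ r.pos, ℓ a ≤ ℓ r.head) ∧ (∀ a ∈ r.neg, ℓ a < ℓ r.head)) :
    LocallyStratified G :=
  ⟨fun a => Ordinal.typein (α := β) (· < ·) (ℓ a), fun r hr =>
    ⟨fun a ha => (Ordinal.typein_le_typein _).2 ((hℓ r hr).1 a ha).not_gt,
     fun a ha => (Ordinal.typein_lt_typein _).2 ((hℓ r hr).2 a ha)⟩⟩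

section Levels

variable {P E : Type} {arP : P → ℕ} {arE : E → ℕ} {C : Type}

theorem XYRule.t_eq_or_eval_lt {rl : XYRule P E arP arE C}
    (hrl : rl.IsXRule ∨ rl.IsYRule ∨ rl.IsExitRule)
    {a : RAtom P arP C} (ha : a ∈ rl.posR ++ rl.negR) (τ : ℕ) :
    a.t = rl.head.t ∨ a.t.eval τ < rl.head.t.eval τ := by
  rcases hrl with ⟨h, hh, hb⟩ | ⟨h, hh, hb, -⟩ | ⟨-, hpos, hneg⟩
  · exact .inl ((hb a ha).trans hh.symm)
  · rcases hb a ha with hat | hat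
    · exact .inr (by simp [hat, hh, TTerm.eval])
    · exact .inl (hat.trans hh.symm)
  · simp [hpos, hneg] at ha

def xyLevel (σ : BiPred P E → ℕ) : GXAtom P E arP arE C → ℕ ×ₗ ℕ
  | .inl ⟨p, t, _⟩ => toLex (t, σ (.inl (true, p)))
  | .inr ⟨e, _⟩ => toLex (0, σ (.inr e))

theorem xyLevel_rAtom_ground (σ : BiPred P E → ℕ) (a : RAtom P arP C) (τ : ℕ) (ν : ℕ → C) :
    xyLevel σ (a.ground τ ν : GXAtom P E arP arE C) = toLex (a.t.eval τ, σ (.inl (true, a.p))) :=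
  rfl

theorem xyLevel_rAtom_ground_le (σ : BiPred P E → ℕ) {a : RAtom P arP C} {t : TTerm} {τ : ℕ}
    (h : a.t = t ∨ a.t.eval τ < t.eval τ) (ν : ℕ → C) :
    xyLevel σ (a.ground τ ν : GXAtom P E arP arE C) ≤
      toLex (t.eval τ, σ (.inl (decide (a.t = t), a.p))) := by
  rw [xyLevel_rAtom_ground, Prod.Lex.toLex_le_toLex]
  rcases h with rfl | hlt
  · simp
  · exact .inl hlt

theorem xyLevel_eAtom_ground_le (σ : BiPred P E → ℕ) (a : EAtom E arE C) (ν : ℕ → C) (t : ℕ) :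
    xyLevel σ (a.ground ν : GXAtom P E arP arE C) ≤ toLex (t, σ (.inr a.e)) := by
  rcases Nat.eq_zero_or_pos t with rfl | ht
  · exact le_rfl
  · exact Prod.Lex.toLex_le_toLex.2 (.inl ht)

/-- With `t := rl.head.t`, `R := rl.posR`, `Es := rl.posE` the list below is `rl.bistate.pos`
(and likewise for the negative body). -/
theorem exists_bistate_atom_of_mem_ground (σ : BiPred P E → ℕ) {t : TTerm} {τ : ℕ} {ν : ℕ → C}
    {R : List (RAtom P arP C)} {Es : List (EAtom E arE C)}
    (hR : ∀ a ∈ R, a.t = t ∨ a.t.eval τ < t.eval τ) {x : GXAtom P E arP arE C}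
    (hx : x ∈ {x | ∃ a ∈ R, x = a.ground τ ν} ∪ {x | ∃ a ∈ Es, x = a.ground ν}) :
    ∃ b ∈ (R.map fun a => (⟨.inl (decide (a.t = t), a.p), a.args⟩ :
              NAtom (BiPred P E) (biar arP arE) C)) ++
          Es.map fun a => ⟨.inr a.e, a.args⟩,
      xyLevel σ x ≤ toLex (t.eval τ, σ b.q) := by
  rcases hx with ⟨a, ha, rfl⟩ | ⟨a, ha, rfl⟩
  · exact ⟨_, List.mem_append_left _ (List.mem_map_of_mem ha),
      xyLevel_rAtom_ground_le σ (hR a ha) ν⟩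
  · exact ⟨_, List.mem_append_right _ (List.mem_map_of_mem ha),
      xyLevel_eAtom_ground_le σ a ν _⟩

end Levels

/-- Every XY-stratified program is locally stratified (its
ground instantiation, over any extensional database, admits a level
mapping). -/
theorem xy_stratified_is_locally_stratified
    {P E C : Type} {arP : P → ℕ} {arE : E → ℕ}
    (Pr : List (XYRule P E arP arE C)) (hxy : XYStratified Pr)
    (edb : Set (Σ e : E, Fin (arE e) → C)) :
    LocallyStratified (groundXY Pr edb) := by
  obtain ⟨hXY, σ, hσ⟩ := hxy
  refine locallyStratified_of_level (xyLevel σ) ?_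
  rintro r (⟨e, -, rfl⟩ | ⟨rl, hrl, τ, ν, rfl⟩)
  · simp
  obtain ⟨hpos, hneg⟩ := hσ rl.bistate (List.mem_map_of_mem hrl)
  have htime := fun a (ha : a ∈ rl.posR ++ rl.negR) => XYRule.t_eq_or_eval_lt (hXY rl hrl) ha τ
  refine ⟨fun x hx => ?_, fun x hx => ?_⟩
  · obtain ⟨b, hb, hx⟩ := exists_bistate_atom_of_mem_ground σ
      (fun a ha => htime a (List.mem_append_left _ ha)) hx
    exact hx.trans (Prod.Lex.toLex_le_toLex.2 (.inr ⟨rfl, hpos b hb⟩))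
  · obtain ⟨b, hb, hx⟩ := exists_bistate_atom_of_mem_ground σ
      (fun a ha => htime a (List.mem_append_right _ ha)) hx
    exact hx.trans_lt (Prod.Lex.toLex_lt_toLex.2 (.inr ⟨rfl, hneg b hb⟩))
end

section
/- The company-control program—control(C,C) ← owns(C,_,_); control(Onr,C) ← towns(Onr,C,Per), Per > 50; towns(Onr,C2, msum⟨Per⟩) ← control(Onr,C1), owns(C1,C2,Per), where msum is the monotonic running-sum aggregate returning the partial sum after each new element—correctly computes transitive corporate control: each pair (Onr,C2) contributes the shares owns(C1,C2,Per) of each company C1 controlled by Onr exactly once to towns, and control(Onr,C) holds iff Onr transitively owns more than 50% of C's shares; since msum is monotonic, the program is computed by the standard semi-naive fixpoint without stratification restrictions. -/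
/-!
# STATEMENT 15

The company-control program

  `control(C,C)  ← owns(C,_,_).`
  `control(Onr,C) ← towns(Onr,C,Per), Per > 50.`
  `towns(Onr,C2, msum⟨Per⟩) ← control(Onr,C1), owns(C1,C2,Per).`

where `msum` is the monotonic running-sum aggregate returning the partial sum
after each new element, correctly computes transitive corporate control:

* each pair `(Onr,C2)` contributes the shares `owns(C1,C2,Per)` of each
  company `C1` controlled by `Onr` exactly once to `towns` (the running sums
  are the sums over *sets* of contributing companies `C1`, each counted once);
* `control(Onr,C)` holds iff `Onr` transitively owns more than `50%` of `C`'s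
  shares;
* since `msum` is monotonic, the program is computed by the standard
  semi-naive fixpoint, without stratification restrictions: its least model is
  the union of the Kleene iterates of its (monotone) immediate-consequence
  operator.

`owns c1 c2` states that corporation `c1` owns `pct c1 c2` percent of the
shares of `c2` (percentages are nonnegative).  The `msum` aggregate in the
recursive `towns` rule produces, for each group `(Onr,C2)`, the partial sums
of the percentages of the companies `C1` already known to be controlled by
`Onr`, each distinct `C1` contributing exactly once; these partial sums are
the sums over nonempty finite sets of contributing companies.
-/

/-- Ground atoms of the company-control program. -/
inductive CCAtom (C : Type) : Type where
  | control (o c : C)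
  | towns (o c : C) (s : ℚ)

/-- The immediate-consequence operator of the company-control program, with
the monotonic `msum` aggregate in the recursive `towns` rule: a running sum
`towns(o,c2,s)` is derivable when `s` is the sum of the percentages of a
nonempty set `T` of companies, each currently controlled by `o` and each
owning shares of `c2` (each contributing company counted exactly once). -/
def ccStep {C : Type} (owns : C → C → Prop) (pct : C → C → ℚ)
    (M : Set (CCAtom C)) : Set (CCAtom C) :=
  {a | ∃ c c2, owns c c2 ∧ a = CCAtom.control c c} ∪
  {a | ∃ o c s, CCAtom.towns o c s ∈ M ∧ s > 50 ∧ a = CCAtom.control o c} ∪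
  {a | ∃ o, ∃ c2, ∃ T : Finset C, T.Nonempty ∧
        (∀ c1 ∈ T, CCAtom.control o c1 ∈ M ∧ owns c1 c2) ∧
        a = CCAtom.towns o c2 (∑ c1 ∈ T, pct c1 c2)}

/-- Least pre-fixpoint (= least fixpoint, for a monotone operator). -/
def lfpSet {α : Type} (F : Set α → Set α) : Set α := ⋂₀ {S | F S ⊆ S}

/-- The intended meaning: the one-step operator of transitive corporate
control.  `(o,c)` is in a step when `o = c` has some outgoing ownership, or
when the combined percentage of `c`'s shares owned by the companies already
transitively controlled by `o` exceeds `50%`. -/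
def tcStep {C : Type} [Fintype C] (owns : C → C → Prop) (pct : C → C → ℚ)
    (S : Set (C × C)) : Set (C × C) :=
  {p | (∃ c2, owns p.1 c2) ∧ p.1 = p.2} ∪
  {p | ∃ T : Finset C, (∀ c1, c1 ∈ T ↔ (p.1, c1) ∈ S ∧ owns c1 p.2) ∧
        50 < ∑ c1 ∈ T, pct c1 p.2}

/-!
Each `msum` running sum involves only finitely many controlled companies, so the
immediate-consequence operator `ccStep` commutes with unions of chains and Kleene's theorem
gives its least fixpoint as the union of its iterates.

For the control atoms, two steps of the program (a running sum over the controlled owners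
of `c`, then the `control` rule) simulate one step of `tcStep`, so the control atoms of the
least model are closed under `tcStep`. Conversely, the atoms `ccModel N` predicted by a
`tcStep`-closed relation `N` are closed under `ccStep`: as percentages are nonnegative, a
running sum over some controlled owners is bounded by the sum over all of them.
-/

open OmegaCompletePartialOrder

theorem Monotone.exists_forall_mem_of_forall_mem_iUnion {α ι : Type*} {X : ℕ → Set α}
    (hX : Monotone X) {T : Finset ι} {f : ι → α} (h : ∀ i ∈ T, f i ∈ ⋃ n, X n) :
    ∃ n, ∀ i ∈ T, f i ∈ X n := by
  choose! n hn using fun i hi => Set.mem_iUnion.1 (h i hi)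
  exact ⟨T.sup n, fun i hi => hX (Finset.le_sup hi) (hn i hi)⟩

section lfpSet

variable {α : Type} {F : Set α → Set α}

-- `lfpSet F` unfolds to `OrderHom.lfp ⟨F, hF⟩`, so Mathlib's fixpoint theory applies verbatim.

theorem lfpSet_subset {S : Set α} (h : F S ⊆ S) : lfpSet F ⊆ S :=
  Set.sInter_subset_of_mem h

theorem map_lfpSet (hF : Monotone F) : F (lfpSet F) = lfpSet F :=
  OrderHom.map_lfp ⟨F, hF⟩

theorem lfpSet_eq_iUnion_iterate (hF : ωScottContinuous F) : lfpSet F = ⋃ n, F^[n] ∅ :=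
  fixedPoints.lfp_eq_sSup_iterate ⟨F, hF.monotone⟩ hF

end lfpSet

section CompanyControl

variable {C : Type} {owns : C → C → Prop} {pct : C → C → ℚ}

@[simp]
theorem control_mem_ccStep_iff {M : Set (CCAtom C)} {o c : C} :
    CCAtom.control o c ∈ ccStep owns pct M ↔
      (o = c ∧ ∃ c2, owns o c2) ∨ ∃ s, CCAtom.towns o c s ∈ M ∧ 50 < s := by
  simp [ccStep, and_comm, eq_comm]

@[simp]
theorem towns_mem_ccStep_iff {M : Set (CCAtom C)} {o c2 : C} {s : ℚ} :
    CCAtom.towns o c2 s ∈ ccStep owns pct M ↔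
      ∃ T : Finset C, T.Nonempty ∧ (∀ c1 ∈ T, CCAtom.control o c1 ∈ M ∧ owns c1 c2) ∧
        s = ∑ c1 ∈ T, pct c1 c2 := by
  simp [ccStep]

theorem ccStep_mono : Monotone (ccStep owns pct) := by
  rintro M N hMN (⟨o, c⟩ | ⟨o, c2, s⟩)
  · simp only [control_mem_ccStep_iff]
    exact Or.imp_right fun ⟨s, hs, h50⟩ => ⟨s, hMN hs, h50⟩
  · simp only [towns_mem_ccStep_iff]
    exact fun ⟨T, hT, hall, hs⟩ =>
      ⟨T, hT, fun c1 h1 => ⟨hMN (hall c1 h1).1, (hall c1 h1).2⟩, hs⟩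

theorem ccStep_iUnion_subset {X : ℕ → Set (CCAtom C)} (hX : Monotone X) :
    ccStep owns pct (⋃ n, X n) ⊆ ⋃ n, ccStep owns pct (X n) := by
  rintro (⟨o, c⟩ | ⟨o, c2, s⟩) ha <;> rw [Set.mem_iUnion]
  · simp only [control_mem_ccStep_iff, Set.mem_iUnion] at ha ⊢
    rcases ha with hbase | ⟨s, ⟨n, hs⟩, h50⟩
    · exact ⟨0, Or.inl hbase⟩
    · exact ⟨n, Or.inr ⟨s, hs, h50⟩⟩
  · simp only [towns_mem_ccStep_iff] at ha ⊢
    obtain ⟨T, hT, hall, rfl⟩ := ha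
    obtain ⟨n, hn⟩ := hX.exists_forall_mem_of_forall_mem_iUnion fun c1 h1 => (hall c1 h1).1
    exact ⟨n, T, hT, fun c1 h1 => ⟨hn c1 h1, (hall c1 h1).2⟩, rfl⟩

theorem ωScottContinuous_ccStep : ωScottContinuous (ccStep owns pct) :=
  .of_monotone_map_ωSup ⟨ccStep_mono, fun X =>
    (ccStep_iUnion_subset X.monotone).antisymm (Set.iUnion_subset fun n =>
      ccStep_mono (Set.subset_iUnion X n))⟩

theorem mem_tcStep_of_lt_sum [Fintype C] (hpos : ∀ c1 c2, owns c1 c2 → 0 ≤ pct c1 c2)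
    {S : Set (C × C)} {o c : C} {T : Finset C} (hT : ∀ c1 ∈ T, (o, c1) ∈ S ∧ owns c1 c)
    (hsum : 50 < ∑ c1 ∈ T, pct c1 c) : (o, c) ∈ tcStep owns pct S := by
  classical
  refine Or.inr ⟨({c1 | (o, c1) ∈ S ∧ owns c1 c} : Finset C), fun c1 => by simp, ?_⟩
  refine hsum.trans_le
    (Finset.sum_le_sum_of_subset_of_nonneg (fun c1 h1 => ?_) fun c1 h1 _ => ?_)
  · simpa using hT c1 h1
  · exact hpos _ _ (Finset.mem_filter.1 h1).2.2

theorem tcStep_mono [Fintype C] (hpos : ∀ c1 c2, owns c1 c2 → 0 ≤ pct c1 c2) :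
    Monotone (tcStep owns pct) := by
  rintro S S' hSS ⟨o, c⟩ (hbase | ⟨T, hT, hsum⟩)
  · exact Or.inl hbase
  · exact mem_tcStep_of_lt_sum hpos (fun c1 h1 => ((hT c1).1 h1).imp_left (@hSS _)) hsum

def controlPairs (M : Set (CCAtom C)) : Set (C × C) := {p | CCAtom.control p.1 p.2 ∈ M}

theorem tcStep_controlPairs_subset [Fintype C] {M : Set (CCAtom C)}
    (hM : ccStep owns pct M = M) : tcStep owns pct (controlPairs M) ⊆ controlPairs M := by
  rintro ⟨o, c⟩ (⟨⟨c2, hown⟩, rfl : o = c⟩ | ⟨T, hT, hsum⟩)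
  · rw [controlPairs, Set.mem_ofPred_eq, ← hM, control_mem_ccStep_iff]
    exact Or.inl ⟨rfl, c2, hown⟩
  · have hT_ne : T.Nonempty :=
      Finset.nonempty_of_sum_ne_zero (lt_trans (by norm_num) hsum).ne'
    have htowns : CCAtom.towns o c (∑ c1 ∈ T, pct c1 c) ∈ M := by
      rw [← hM, towns_mem_ccStep_iff]
      exact ⟨T, hT_ne, fun c1 h1 => (hT c1).1 h1, rfl⟩
    rw [controlPairs, Set.mem_ofPred_eq, ← hM, control_mem_ccStep_iff]
    exact Or.inr ⟨_, htowns, hsum⟩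

def ccModel (owns : C → C → Prop) (pct : C → C → ℚ) (N : Set (C × C)) : Set (CCAtom C)
  | .control o c => (o, c) ∈ N
  | .towns o c2 s =>
    ∃ T : Finset C, T.Nonempty ∧ (∀ c1 ∈ T, (o, c1) ∈ N ∧ owns c1 c2) ∧ s = ∑ c1 ∈ T, pct c1 c2

theorem ccStep_ccModel_subset [Fintype C] (hpos : ∀ c1 c2, owns c1 c2 → 0 ≤ pct c1 c2)
    {N : Set (C × C)} (hN : tcStep owns pct N ⊆ N) :
    ccStep owns pct (ccModel owns pct N) ⊆ ccModel owns pct N := by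
  rintro (⟨o, c⟩ | ⟨o, c2, s⟩) ha
  · rw [control_mem_ccStep_iff] at ha
    apply hN
    rcases ha with ⟨rfl, c2, hown⟩ | ⟨s, ⟨T, -, hT, rfl⟩, hsum⟩
    · exact Or.inl ⟨⟨c2, hown⟩, rfl⟩
    · exact mem_tcStep_of_lt_sum hpos hT hsum
  · exact towns_mem_ccStep_iff.1 ha

end CompanyControl

/-- For every finite ownership database (`owns`, with
nonnegative percentages `pct`), the least model `M` of the company-control
program with the monotonic `msum` aggregate satisfies:

1. the `towns` atoms of `M` are exactly the running sums in which each
   controlled company `C1` contributes its shares of `C2` exactly once;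
2. `control(o,c) ∈ M` iff `o` transitively owns more than `50%` of `c`'s
   shares (i.e. `(o,c)` is in the least fixpoint of transitive control);
3. `msum` being monotonic, `M` is computed by the standard semi-naive fixpoint
   iteration, with no stratification restriction: `M = ⋃ₙ stepⁿ(∅)`. -/
theorem company_control_program_correct
    {C : Type} [Fintype C] (owns : C → C → Prop) (pct : C → C → ℚ)
    (hpos : ∀ c1 c2, owns c1 c2 → 0 ≤ pct c1 c2) :
    (∀ o c2 s, CCAtom.towns o c2 s ∈ lfpSet (ccStep owns pct) ↔
      ∃ T : Finset C, T.Nonempty ∧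
        (∀ c1 ∈ T, CCAtom.control o c1 ∈ lfpSet (ccStep owns pct) ∧ owns c1 c2) ∧
        s = ∑ c1 ∈ T, pct c1 c2) ∧
    (∀ o c, CCAtom.control o c ∈ lfpSet (ccStep owns pct) ↔
      (o, c) ∈ lfpSet (tcStep owns pct)) ∧
    lfpSet (ccStep owns pct) = ⋃ n : ℕ, (ccStep owns pct)^[n] ∅ := by
  have hM := map_lfpSet (ccStep_mono (owns := owns) (pct := pct))
  have hN := map_lfpSet (tcStep_mono hpos)
  refine ⟨fun o c2 s => ?_, fun o c => ⟨fun h => ?_, fun h => ?_⟩,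
    lfpSet_eq_iUnion_iterate ωScottContinuous_ccStep⟩
  · rw [← towns_mem_ccStep_iff, hM]
  · exact lfpSet_subset (ccStep_ccModel_subset hpos hN.subset) h
  · exact lfpSet_subset (tcStep_controlPairs_subset hM) h
end
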